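/- T_\alpha is H\"older continuous with exponent 1/2 on the dyadic rationals: there exists a constant K (depending on \alpha) such that |T_\alpha(p) - T_\alpha(q)| \le K |p - q|^{1/2} for all dyadic rationals p, q \in [0,1]. -/

import Mathlib

open Finset

/-- `f2 x = -x log₂ x`, the summand of base-2 Shannon entropy. -/
noncomputable def f2 (x : ℝ) : ℝ := -x * Real.logb 2 x

/-- Binary entropy function `H(α)` (base 2). -/
noncomputable def binEnt (α : ℝ) : ℝ := f2 α + f2 (1 - α)

/-- Joint pmf of `(Xⁿ, Yⁿ)` where `Xⁿ` is i.i.d. Bernoulli(1/2) and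
`Yⁿ = Xⁿ ⊕ Zⁿ` with `Zⁿ` i.i.d. Bernoulli(α) (a memoryless BSC(α)). -/
noncomputable def jointP (n : ℕ) (α : ℝ) (x y : Fin n → Bool) : ℝ :=
  (1/2)^n * ∏ i, (if x i = y i then 1 - α else α)

/-- `Pr{b(Xⁿ) = u, Yⁿ = y}`. -/
noncomputable def pBY (n : ℕ) (α : ℝ) (b : (Fin n → Bool) → Bool) (u : Bool)
    (y : Fin n → Bool) : ℝ :=
  ∑ x : Fin n → Bool, if b x = u then jointP n α x y else 0

/-- `Pr{b(Xⁿ) = u}` for `Xⁿ` uniform on `{0,1}ⁿ`. -/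
noncomputable def pB (n : ℕ) (b : (Fin n → Bool) → Bool) (u : Bool) : ℝ :=
  ∑ x : Fin n → Bool, if b x = u then (1/2)^n else 0

/-- `H(b(Xⁿ))`, the entropy of the Boolean function's output. -/
noncomputable def HB (n : ℕ) (b : (Fin n → Bool) → Bool) : ℝ :=
  ∑ u : Bool, f2 (pB n b u)

/-- `Pr{b(Xⁿ) = 0 ∣ Yⁿ = y}` (note `Pr{Yⁿ = y} = 2⁻ⁿ` since `Yⁿ` is uniform;
`0` is encoded as `false`). -/
noncomputable def condP (n : ℕ) (α : ℝ) (b : (Fin n → Bool) → Bool)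
    (y : Fin n → Bool) : ℝ :=
  (2:ℝ)^n * pBY n α b false y

/-- The conditional entropy `H(b(Xⁿ) ∣ Yⁿ)`. -/
noncomputable def condHB (n : ℕ) (α : ℝ) (b : (Fin n → Bool) → Bool) : ℝ :=
  ∑ y : Fin n → Bool, (1/2)^n * ∑ u : Bool, f2 ((2:ℝ)^n * pBY n α b u y)

/-- The mutual information `I(b(Xⁿ); Yⁿ) = H(b(Xⁿ)) - H(b(Xⁿ) ∣ Yⁿ)`. -/
noncomputable def MI (n : ℕ) (α : ℝ) (b : (Fin n → Bool) → Bool) : ℝ :=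
  HB n b - condHB n α b

/-- The numeric value of `x ∈ {0,1}ⁿ` with the first coordinate most significant;
`x ≺_L x'` in the lexicographic order iff `vecVal x < vecVal x'`. -/
def vecVal {n : ℕ} (x : Fin n → Bool) : ℕ :=
  ∑ i : Fin n, if x i then 2 ^ (n - 1 - i.val) else 0

/-- The unique lex Boolean function on `n` inputs whose preimage of `0` (= `false`)
is the initial segment of size `k` of the lexicographic order on `{0,1}ⁿ`. -/
def lexFun (n k : ℕ) : (Fin n → Bool) → Bool := fun x => decide (k ≤ vecVal x)

/-- `T_α` at the dyadic rational `k/2ⁿ`: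
`T_α(k/2ⁿ) = E_{Yⁿ} f(Pr{b(Xⁿ)=0 ∣ Yⁿ})` where `b` is the lex function on `n`
inputs with `Pr{b(Xⁿ)=0} = k/2ⁿ`. -/
noncomputable def Tdy (α : ℝ) (n k : ℕ) : ℝ :=
  ∑ y : Fin n → Bool, (1/2)^n * f2 (condP n α (lexFun n k) y)

open Real

/-! Refining the level (`n ↦ n + 1`, `k ↦ 2k`) does not change `T`, since the lex function ignores
the last input. Raising `k` by one at level `n` adds a single input `x₀` to `b⁻¹(0)`, so
`Pr{b = 0 ∣ Yⁿ = y}` grows by `δ(y) = 2ⁿ Pr{Xⁿ = x₀, Yⁿ = y} ≥ αⁿ`; as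
`|f(B + δ) - f(B)| ≤ f(δ) + δ / ln 2 ≤ δ (n log₂(1/α) + 1 / ln 2)` and `E δ(Yⁿ) = 2⁻ⁿ`,
neighbouring values at level `n` differ by `O(n 2⁻ⁿ)`. Two points at distance `≈ 2⁻ʲ` are
compared through their truncations to level `j`, and the telescoping truncation errors sum to
`O(j 2⁻ʲ) = O(2^{-j/2})`. -/

section HolderCriterion

variable {T : ℕ → ℕ → ℝ} {C : ℝ}

lemma nonneg_of_abs_succ_sub_le
    (hstep : ∀ n k, k + 1 ≤ 2 ^ n → |T n (k + 1) - T n k| ≤ C * (n + 1) / 2 ^ n) : 0 ≤ C := by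
  simpa using (abs_nonneg _).trans (hstep 0 0 le_rfl)

lemma abs_add_sub_le_of_abs_succ_sub_le
    (hstep : ∀ n k, k + 1 ≤ 2 ^ n → |T n (k + 1) - T n k| ≤ C * (n + 1) / 2 ^ n)
    {n k d : ℕ} (h : k + d ≤ 2 ^ n) :
    |T n (k + d) - T n k| ≤ d * (C * (n + 1) / 2 ^ n) := by
  induction d with
  | zero => simp
  | succ d ih =>
    calc |T n (k + d + 1) - T n k|
        ≤ |T n (k + d + 1) - T n (k + d)| + |T n (k + d) - T n k| := abs_sub_le _ _ _
      _ ≤ C * (n + 1) / 2 ^ n + d * (C * (n + 1) / 2 ^ n) :=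
          add_le_add (hstep n (k + d) (by omega)) (ih (by omega))
      _ = (d + 1 : ℕ) * (C * (n + 1) / 2 ^ n) := by push_cast; ring

lemma eq_mul_two_pow_of_double (hdouble : ∀ n k, T (n + 1) (2 * k) = T n k) {n N : ℕ}
    (h : n ≤ N) (k : ℕ) :
    T N (k * 2 ^ (N - n)) = T n k := by
  obtain ⟨m, rfl⟩ := Nat.exists_eq_add_of_le h
  rw [Nat.add_sub_cancel_left]
  induction m with
  | zero => simp
  | succ m ih =>
    rw [show k * 2 ^ (m + 1) = 2 * (k * 2 ^ m) by ring, ← Nat.add_assoc, hdouble, ih (by omega)]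

lemma abs_sub_div_two_pow_le (hdouble : ∀ n k, T (n + 1) (2 * k) = T n k)
    (hstep : ∀ n k, k + 1 ≤ 2 ^ n → |T n (k + 1) - T n k| ≤ C * (n + 1) / 2 ^ n)
    (j i k : ℕ) (hk : k ≤ 2 ^ (j + i)) :
    |T (j + i) k - T j (k / 2 ^ i)| ≤
      C * ((j + 3) / 2 ^ j - ((j + i : ℕ) + 3) / 2 ^ (j + i)) := by
  induction i generalizing k with
  | zero => simp
  | succ i ih =>
    have hC := nonneg_of_abs_succ_sub_le hstep
    have hrefine : |T (j + i + 1) k - T (j + i) (k / 2)| ≤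
        C * ((j + i + 1 : ℕ) + 1) / 2 ^ (j + i + 1) := by
      have hsplit := Nat.div_add_mod k 2
      have h := abs_add_sub_le_of_abs_succ_sub_le hstep (n := j + i + 1) (k := 2 * (k / 2))
        (d := k % 2) (by rw [hsplit]; exact hk)
      rw [hsplit, hdouble] at h
      refine h.trans (mul_le_of_le_one_left (by positivity) ?_)
      exact_mod_cast Nat.le_of_lt_succ (Nat.mod_lt k two_pos)
    have hih := ih (k / 2) (Nat.div_le_of_le_mul (by rw [← pow_succ']; exact hk))
    rw [Nat.div_div_eq_div_mul, ← pow_succ'] at hih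
    calc |T (j + (i + 1)) k - T j (k / 2 ^ (i + 1))|
        ≤ |T (j + i + 1) k - T (j + i) (k / 2)| + |T (j + i) (k / 2) - T j (k / 2 ^ (i + 1))| :=
          abs_sub_le _ _ _
      _ ≤ C * ((j + i + 1 : ℕ) + 1) / 2 ^ (j + i + 1) +
            C * ((j + 3) / 2 ^ j - ((j + i : ℕ) + 3) / 2 ^ (j + i)) := add_le_add hrefine hih
      _ = C * ((j + 3) / 2 ^ j - ((j + (i + 1) : ℕ) + 3) / 2 ^ (j + (i + 1))) := by
          push_cast; rw [← add_assoc, pow_succ]; field_simp; ring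

lemma sq_add_three_le_nine_mul_two_pow (j : ℕ) : (j + 3) ^ 2 ≤ 9 * 2 ^ j := by
  induction j with
  | zero => norm_num
  | succ j ih =>
    have h1 := Nat.lt_two_pow_self (n := j)
    have h2 := Nat.one_le_two_pow (n := j)
    rw [show (j + 1 + 3) ^ 2 = (j + 3) ^ 2 + 2 * j + 7 by ring, pow_succ 2 j]
    linarith

lemma add_three_div_two_pow_le_sqrt (j : ℕ) : ((j : ℝ) + 3) / 2 ^ j ≤ √(9 / 2 ^ j) := by
  apply Real.le_sqrt_of_sq_le
  have h : ((j : ℝ) + 3) ^ 2 ≤ 9 * 2 ^ j := by exact_mod_cast sq_add_three_le_nine_mul_two_pow j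
  rw [div_pow, ← pow_mul, div_le_div_iff₀ (by positivity) (by positivity)]
  calc ((j : ℝ) + 3) ^ 2 * 2 ^ j ≤ 9 * 2 ^ j * 2 ^ j := by gcongr
    _ = 9 * 2 ^ (j * 2) := by ring

lemma exists_eq_add_of_le_two_pow {m N : ℕ} (hm : 1 ≤ m) (hmN : m ≤ 2 ^ N) :
    ∃ j i, N = j + i ∧ m ≤ 2 ^ i ∧ 2 ^ i ≤ 2 * m := by
  refine ⟨N - Nat.clog 2 m, Nat.clog 2 m, (Nat.sub_add_cancel (Nat.clog_le_of_le_pow hmN)).symm,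
    Nat.le_pow_clog one_lt_two m, ?_⟩
  rcases hm.eq_or_lt with rfl | hm
  · simp
  · have hpos : 0 < Nat.clog 2 m := Nat.clog_pos one_lt_two hm
    have := Nat.pow_pred_clog_lt_self one_lt_two hm
    rw [← Nat.succ_pred_eq_of_pos hpos, pow_succ]
    omega

lemma abs_sub_le_of_div_two_pow_le_succ (hdouble : ∀ n k, T (n + 1) (2 * k) = T n k)
    (hstep : ∀ n k, k + 1 ≤ 2 ^ n → |T n (k + 1) - T n k| ≤ C * (n + 1) / 2 ^ n)
    {j i a b : ℕ} (ha : a ≤ 2 ^ (j + i)) (hb : b ≤ 2 ^ (j + i)) (hab : a ≤ b)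
    (hnear : b / 2 ^ i ≤ a / 2 ^ i + 1) :
    |T (j + i) a - T (j + i) b| ≤ 3 * C * ((j + 3) / 2 ^ j) := by
  have hC := nonneg_of_abs_succ_sub_le hstep
  have hbj : b / 2 ^ i ≤ 2 ^ j := Nat.div_le_of_le_mul (by rw [mul_comm, ← pow_add]; exact hb)
  have hdiv : a / 2 ^ i ≤ b / 2 ^ i := Nat.div_le_div_right hab
  have hmid : |T j (b / 2 ^ i) - T j (a / 2 ^ i)| ≤ C * ((j + 3) / 2 ^ j) := by
    have h := abs_add_sub_le_of_abs_succ_sub_le hstep (n := j) (k := a / 2 ^ i)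
      (d := b / 2 ^ i - a / 2 ^ i) (by omega)
    rw [Nat.add_sub_cancel' hdiv] at h
    refine h.trans ?_
    rw [mul_div_assoc]
    refine mul_le_of_le_one_left (by positivity) (by exact_mod_cast (by omega : _ ≤ 1)) |>.trans ?_
    gcongr
    linarith
  have htrunc_a := abs_sub_div_two_pow_le hdouble hstep j i a ha
  have htrunc_b := abs_sub_div_two_pow_le hdouble hstep j i b hb
  have htail : 0 ≤ C * ((((j + i : ℕ) : ℝ) + 3) / 2 ^ (j + i)) := by positivity
  rw [mul_sub] at htrunc_a htrunc_b
  have h1 := abs_sub_le (T (j + i) a) (T j (a / 2 ^ i)) (T (j + i) b)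
  have h2 := abs_sub_le (T j (a / 2 ^ i)) (T j (b / 2 ^ i)) (T (j + i) b)
  rw [abs_sub_comm] at hmid htrunc_b
  linarith

lemma abs_sub_le_sqrt_of_same_level (hdouble : ∀ n k, T (n + 1) (2 * k) = T n k)
    (hstep : ∀ n k, k + 1 ≤ 2 ^ n → |T n (k + 1) - T n k| ≤ C * (n + 1) / 2 ^ n)
    {N a b : ℕ} (ha : a ≤ 2 ^ N) (hb : b ≤ 2 ^ N) :
    |T N a - T N b| ≤ 3 * C * √(18 * |(a : ℝ) / 2 ^ N - b / 2 ^ N|) := by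
  wlog hab : a ≤ b generalizing a b
  · rw [abs_sub_comm, abs_sub_comm (a / _ : ℝ)]
    exact this hb ha (by omega)
  have hC := nonneg_of_abs_succ_sub_le hstep
  obtain rfl | hlt := hab.eq_or_lt
  · simp
  -- compare at the scale `2 ^ i ≈ b - a`, where the truncations of `a` and `b` are adjacent
  obtain ⟨j, i, rfl, hmi, him⟩ :=
    exists_eq_add_of_le_two_pow (m := b - a) (N := N) (by omega) (by omega)
  have hnear : b / 2 ^ i ≤ a / 2 ^ i + 1 := by
    rw [← Nat.add_div_right _ (by positivity)]
    exact Nat.div_le_div_right (by omega)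
  have hscale : 9 / (2 : ℝ) ^ j ≤ 18 * |(a : ℝ) / 2 ^ (j + i) - b / 2 ^ (j + i)| := by
    have him' : (2 : ℝ) ^ i ≤ 2 * ((b - a : ℕ) : ℝ) := by exact_mod_cast him
    rw [abs_sub_comm, ← sub_div, ← Nat.cast_sub hab, abs_of_nonneg (by positivity), pow_add]
    calc 9 / (2 : ℝ) ^ j = 9 * 2 ^ i / (2 ^ j * 2 ^ i) := by field_simp
      _ ≤ 9 * (2 * ((b - a : ℕ) : ℝ)) / (2 ^ j * 2 ^ i) := by gcongr
      _ = 18 * (((b - a : ℕ) : ℝ) / (2 ^ j * 2 ^ i)) := by ring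
  refine (abs_sub_le_of_div_two_pow_le_succ hdouble hstep ha hb hab hnear).trans ?_
  gcongr
  exact (add_three_div_two_pow_le_sqrt j).trans (Real.sqrt_le_sqrt hscale)

lemma mul_two_pow_sub_le {n N k : ℕ} (hk : k ≤ 2 ^ n) (h : n ≤ N) : k * 2 ^ (N - n) ≤ 2 ^ N :=
  (Nat.mul_le_mul_right _ hk).trans (by rw [← pow_add, Nat.add_sub_cancel' h])

lemma cast_mul_two_pow_sub_div {n N : ℕ} (k : ℕ) (h : n ≤ N) :
    ((k * 2 ^ (N - n) : ℕ) : ℝ) / 2 ^ N = k / 2 ^ n := by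
  rw [← pow_mul_pow_sub 2 h]
  push_cast
  exact mul_div_mul_right _ _ (by positivity : (2 : ℝ) ^ (N - n) ≠ 0)

theorem exists_holder_of_dyadic (hdouble : ∀ n k, T (n + 1) (2 * k) = T n k)
    (hstep : ∀ n k, k + 1 ≤ 2 ^ n → |T n (k + 1) - T n k| ≤ C * (n + 1) / 2 ^ n) :
    ∃ K : ℝ, ∀ n k n' k' : ℕ, k ≤ 2 ^ n → k' ≤ 2 ^ n' →
      |T n k - T n' k'| ≤ K * |(k : ℝ) / 2 ^ n - (k' : ℝ) / 2 ^ n'| ^ ((1 : ℝ) / 2) := by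
  refine ⟨3 * C * √18, fun n k n' k' hk hk' => ?_⟩
  have hn := le_max_left n n'
  have hn' := le_max_right n n'
  have h := abs_sub_le_sqrt_of_same_level hdouble hstep (mul_two_pow_sub_le hk hn)
    (mul_two_pow_sub_le hk' hn')
  rwa [eq_mul_two_pow_of_double hdouble hn, eq_mul_two_pow_of_double hdouble hn',
    cast_mul_two_pow_sub_div k hn, cast_mul_two_pow_sub_div k' hn', Real.sqrt_mul (by norm_num),
    ← mul_assoc, Real.sqrt_eq_rpow |_|] at h

end HolderCriterion

lemma f2_eq_negMulLog (x : ℝ) : f2 x = negMulLog x / log 2 := by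
  simp only [f2, negMulLog, logb]; ring

namespace Real

lemma mul_log_le_mul_log_add {a b : ℝ} (ha : 0 ≤ a) (hb : 0 ≤ b) :
    a * log a ≤ a * log (a + b) := by
  rcases ha.eq_or_lt with rfl | ha
  · simp
  · exact mul_le_mul_of_nonneg_left (log_le_log ha (by linarith)) ha.le

lemma negMulLog_add_le {a b : ℝ} (ha : 0 ≤ a) (hb : 0 ≤ b) :
    negMulLog (a + b) ≤ negMulLog a + negMulLog b := by
  have h1 := mul_log_le_mul_log_add ha hb
  have h2 := mul_log_le_mul_log_add hb ha
  rw [add_comm b] at h2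
  simp only [negMulLog]
  linarith

lemma negMulLog_sub_negMulLog_add_le {a d : ℝ} (ha : 0 ≤ a) (hd : 0 ≤ d) (h1 : a + d ≤ 1) :
    negMulLog a - negMulLog (a + d) ≤ d := by
  have hlog : d * log (a + d) ≤ 0 :=
    mul_nonpos_of_nonneg_of_nonpos hd (log_nonpos (by linarith) h1)
  have hratio : a * log (a + d) - a * log a ≤ d := by
    rcases ha.eq_or_lt with rfl | ha
    · simpa using hd
    · have h := log_le_sub_one_of_pos (show 0 < (a + d) / a by positivity)
      rw [log_div (by positivity) ha.ne', add_div, div_self ha.ne'] at h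
      have := mul_le_mul_of_nonneg_left h ha.le
      rwa [mul_sub, add_sub_cancel_left, mul_div_cancel₀ _ ha.ne'] at this
  simp only [negMulLog]
  linarith

lemma negMulLog_le_mul_neg_log {ε x : ℝ} (hε : 0 < ε) (h : ε ≤ x) :
    negMulLog x ≤ x * -log ε := by
  rw [negMulLog, neg_mul, ← mul_neg]
  exact mul_le_mul_of_nonneg_left (neg_le_neg (log_le_log hε h)) (hε.le.trans h)

lemma abs_negMulLog_add_sub_le {a δ ε : ℝ} (ha : 0 ≤ a) (hε : 0 < ε) (hεδ : ε ≤ δ)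
    (h1 : a + δ ≤ 1) : |negMulLog (a + δ) - negMulLog a| ≤ δ * (1 - log ε) := by
  have hδ : 0 ≤ δ := hε.le.trans hεδ
  have hup := negMulLog_add_le ha hδ
  have hdown := negMulLog_sub_negMulLog_add_le ha hδ h1
  have hδlog := negMulLog_le_mul_neg_log hε hεδ
  have hδnonneg := negMulLog_nonneg hδ (by linarith)
  rw [abs_le]
  constructor <;> nlinarith

end Real

section Channel

variable {n k : ℕ} {α : ℝ}

lemma vecVal_snoc (x : Fin n → Bool) (a : Bool) :
    vecVal (Fin.snoc x a : Fin (n + 1) → Bool) = 2 * vecVal x + a.toNat := by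
  simp only [vecVal, Fin.sum_univ_castSucc, Fin.snoc_castSucc, Fin.snoc_last, Fin.val_last,
    Fin.val_castSucc, Nat.add_sub_cancel, Nat.sub_self, pow_zero, Finset.mul_sum]
  congr 1
  · refine Finset.sum_congr rfl fun i _ => ?_
    rw [show n - i.val = (n - 1 - i.val) + 1 by omega, pow_succ]
    cases x i <;> simp [mul_comm]
  · cases a <;> rfl

lemma vecVal_lt (x : Fin n → Bool) : vecVal x < 2 ^ n := by
  induction n with
  | zero => simp [vecVal]
  | succ n ih =>
    rw [← Fin.snoc_init_self x, vecVal_snoc, pow_succ]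
    have := ih (Fin.init x)
    have := Bool.toNat_le (x (Fin.last n))
    omega

lemma vecVal_injective : Function.Injective (vecVal : (Fin n → Bool) → ℕ) := by
  induction n with
  | zero => exact fun _ _ _ => Subsingleton.elim _ _
  | succ n ih =>
    intro x y h
    rw [← Fin.snoc_init_self x, ← Fin.snoc_init_self y, vecVal_snoc, vecVal_snoc] at h
    have hx := Bool.toNat_le (x (Fin.last n))
    have hy := Bool.toNat_le (y (Fin.last n))
    have hlast : x (Fin.last n) = y (Fin.last n) := by
      have : (x (Fin.last n)).toNat = (y (Fin.last n)).toNat := by omega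
      revert this
      cases x (Fin.last n) <;> cases y (Fin.last n) <;> simp
    have hinit : Fin.init x = Fin.init y := ih (by omega)
    rw [← Fin.snoc_init_self x, ← Fin.snoc_init_self y, hinit, hlast]

lemma exists_vecVal_eq_iff (hk : k < 2 ^ n) :
    ∃ x₀ : Fin n → Bool, ∀ x, vecVal x = k ↔ x = x₀ := by
  let v : (Fin n → Bool) → Fin (2 ^ n) := fun x => ⟨vecVal x, vecVal_lt x⟩
  have hv : Function.Bijective v := (Fintype.bijective_iff_injective_and_card v).mpr
    ⟨fun x y h => vecVal_injective (Fin.val_eq_of_eq h), by simp⟩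
  obtain ⟨x₀, hx₀⟩ := hv.surjective ⟨k, hk⟩
  refine ⟨x₀, fun x => ⟨fun h => hv.injective ?_, fun h => h ▸ congrArg Fin.val hx₀⟩⟩
  rw [hx₀]
  exact Fin.ext h

lemma jointP_comm (x y : Fin n → Bool) : jointP n α x y = jointP n α y x := by
  simp only [jointP, eq_comm]

lemma jointP_nonneg (h0 : 0 ≤ α) (h1 : α ≤ 1) (x y : Fin n → Bool) : 0 ≤ jointP n α x y :=
  mul_nonneg (by positivity) (Finset.prod_nonneg fun i _ => by split_ifs <;> linarith)

lemma sum_jointP_left (y : Fin n → Bool) : ∑ x, jointP n α x y = (1 / 2) ^ n := by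
  have hbit (b : Bool) : ∑ a : Bool, (if a = b then 1 - α else α) = 1 := by
    cases b <;> simp
  simp only [jointP, ← Finset.mul_sum]
  rw [← Fintype.prod_sum (fun i a => if a = y i then 1 - α else α)]
  simp only [hbit, Finset.prod_const_one, mul_one]

lemma sum_jointP_right (x : Fin n → Bool) : ∑ y, jointP n α x y = (1 / 2) ^ n := by
  simp only [jointP_comm x, sum_jointP_left]

lemma pow_le_two_pow_mul_jointP (h0 : 0 ≤ α) (h : α ≤ 1 / 2) (x y : Fin n → Bool) :
    α ^ n ≤ 2 ^ n * jointP n α x y := by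
  rw [jointP, ← mul_assoc, ← mul_pow, show (2 : ℝ) * (1 / 2) = 1 by norm_num, one_pow, one_mul,
    ← Fin.prod_const]
  exact Finset.prod_le_prod (fun _ _ => h0) fun i _ => by split_ifs <;> linarith

lemma jointP_snoc (x y : Fin n → Bool) (a b : Bool) :
    jointP (n + 1) α (Fin.snoc x a) (Fin.snoc y b) =
      1 / 2 * (if a = b then 1 - α else α) * jointP n α x y := by
  simp only [jointP, Fin.prod_univ_castSucc, Fin.snoc_castSucc, Fin.snoc_last, pow_succ]
  ring

lemma condP_mem_Icc (h0 : 0 ≤ α) (h1 : α ≤ 1) (b : (Fin n → Bool) → Bool) (y : Fin n → Bool) :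
    condP n α b y ∈ Set.Icc 0 1 := by
  have hle : pBY n α b false y ≤ (1 / 2) ^ n := by
    rw [← sum_jointP_left y]
    exact Finset.sum_le_sum fun x _ => by split_ifs; exacts [le_rfl, jointP_nonneg h0 h1 x y]
  have hnonneg : 0 ≤ pBY n α b false y :=
    Finset.sum_nonneg fun x _ => by split_ifs; exacts [jointP_nonneg h0 h1 x y, le_rfl]
  refine ⟨by unfold condP; positivity, ?_⟩
  calc condP n α b y ≤ 2 ^ n * (1 / 2) ^ n := mul_le_mul_of_nonneg_left hle (by positivity)
    _ = 1 := by rw [← mul_pow]; norm_num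

lemma lexFun_double_snoc (x : Fin n → Bool) (a : Bool) :
    lexFun (n + 1) (2 * k) (Fin.snoc x a) = lexFun n k x := by
  have := Bool.toNat_le a
  simp only [lexFun, vecVal_snoc, decide_eq_decide]
  omega

lemma sum_snoc {M : Type*} [AddCommMonoid M] (g : (Fin (n + 1) → Bool) → M) :
    ∑ z, g z = ∑ a : Bool, ∑ x : Fin n → Bool, g (Fin.snoc x a) := by
  rw [← (Fin.snocEquiv fun _ => Bool).sum_comp, Fintype.sum_prod_type]
  rfl

lemma condP_double_snoc (y : Fin n → Bool) (b : Bool) :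
    condP (n + 1) α (lexFun (n + 1) (2 * k)) (Fin.snoc y b) = condP n α (lexFun n k) y := by
  simp only [condP, pBY, sum_snoc, lexFun_double_snoc, jointP_snoc, Fintype.sum_bool]
  rw [← Finset.sum_add_distrib, pow_succ, mul_assoc, Finset.mul_sum]
  congr 1
  refine Finset.sum_congr rfl fun x _ => ?_
  by_cases hx : lexFun n k x = false <;> cases b <;> simp [hx] <;> ring

lemma Tdy_double (α : ℝ) (n k : ℕ) : Tdy α (n + 1) (2 * k) = Tdy α n k := by
  simp only [Tdy, sum_snoc, condP_double_snoc, Fintype.sum_bool, pow_succ]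
  rw [← Finset.sum_add_distrib]
  exact Finset.sum_congr rfl fun _ _ => by ring

lemma condP_succ {x₀ : Fin n → Bool} (hx₀ : ∀ x, vecVal x = k ↔ x = x₀) (y : Fin n → Bool) :
    condP n α (lexFun n (k + 1)) y = condP n α (lexFun n k) y + 2 ^ n * jointP n α x₀ y := by
  have hsingle : jointP n α x₀ y = ∑ x, if x = x₀ then jointP n α x y else 0 := by simp
  rw [condP, condP, ← mul_add, hsingle, pBY, pBY, ← Finset.sum_add_distrib]
  congr 1
  refine Finset.sum_congr rfl fun x _ => ?_
  simp only [← hx₀, lexFun, decide_eq_false_iff_not, not_le]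
  split_ifs <;> first | (exfalso; omega) | ring

lemma abs_f2_condP_succ_sub_le (h0 : 0 < α) (h : α < 1 / 2) {x₀ : Fin n → Bool}
    (hx₀ : ∀ x, vecVal x = k ↔ x = x₀) (y : Fin n → Bool) :
    |f2 (condP n α (lexFun n (k + 1)) y) - f2 (condP n α (lexFun n k) y)| ≤
      (1 - log α) / log 2 * (n + 1) * (2 ^ n * jointP n α x₀ y) := by
  have hB := condP_mem_Icc h0.le (by linarith) (lexFun n k) y
  have hB' := condP_mem_Icc (n := n) h0.le (by linarith) (lexFun n (k + 1)) y
  rw [condP_succ hx₀] at hB' ⊢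
  have hδ := pow_le_two_pow_mul_jointP (n := n) h0.le h.le x₀ y
  have hJ := jointP_nonneg (n := n) h0.le (by linarith) x₀ y
  have hlogα : log α < 0 := log_neg h0 (by linarith)
  have hlog2 := log_pos one_lt_two
  rw [f2_eq_negMulLog, f2_eq_negMulLog, ← sub_div, abs_div, abs_of_pos hlog2, div_le_iff₀ hlog2]
  calc _ ≤ 2 ^ n * jointP n α x₀ y * (1 - log (α ^ n)) :=
        abs_negMulLog_add_sub_le hB.1 (pow_pos h0 n) hδ hB'.2
    _ ≤ _ := by
        rw [log_pow]
        field_simp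
        rw [mul_assoc]
        exact mul_le_mul_of_nonneg_left (by nlinarith [n.cast_nonneg (α := ℝ)]) hJ

lemma abs_Tdy_succ_sub_le (h0 : 0 < α) (h : α < 1 / 2) (hk : k + 1 ≤ 2 ^ n) :
    |Tdy α n (k + 1) - Tdy α n k| ≤ (1 - log α) / log 2 * (n + 1) / 2 ^ n := by
  obtain ⟨x₀, hx₀⟩ := exists_vecVal_eq_iff (show k < 2 ^ n by omega)
  have hdiff : Tdy α n (k + 1) - Tdy α n k = ∑ y, (1 / 2) ^ n *
      (f2 (condP n α (lexFun n (k + 1)) y) - f2 (condP n α (lexFun n k) y)) := by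
    simp only [Tdy, ← Finset.sum_sub_distrib, mul_sub]
  calc |Tdy α n (k + 1) - Tdy α n k|
      ≤ ∑ y, |(1 / 2 : ℝ) ^ n *
          (f2 (condP n α (lexFun n (k + 1)) y) - f2 (condP n α (lexFun n k) y))| :=
        hdiff ▸ Finset.abs_sum_le_sum_abs _ _
    _ ≤ ∑ y, (1 / 2) ^ n * ((1 - log α) / log 2 * (n + 1) * (2 ^ n * jointP n α x₀ y)) := by
        refine Finset.sum_le_sum fun y _ => ?_
        rw [abs_mul, abs_of_pos (by positivity)]
        exact mul_le_mul_of_nonneg_left (abs_f2_condP_succ_sub_le h0 h hx₀ y) (by positivity)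
    _ = (1 - log α) / log 2 * (n + 1) / 2 ^ n := by
        simp only [← Finset.mul_sum, sum_jointP_right, one_div, inv_pow]
        field_simp

end Channel

/-- `T_α` is Hölder continuous with exponent `1/2` on the dyadic rationals: there
is a constant `K` (depending on `α`) with `|T_α(p) - T_α(q)| ≤ K|p - q|^{1/2}`
for all dyadic rationals `p = k/2ⁿ`, `q = k'/2^{n'}` in `[0,1]`. -/
theorem T_holder (α : ℝ) (hα : α ∈ Set.Ioo (0:ℝ) (1/2)) :
    ∃ K : ℝ, ∀ n k n' k' : ℕ, k ≤ 2^n → k' ≤ 2^n' →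
      |Tdy α n k - Tdy α n' k'| ≤
        K * |(k:ℝ)/2^n - (k':ℝ)/2^(n':ℕ)| ^ ((1:ℝ)/2) :=
  exists_holder_of_dyadic (Tdy_double α) fun _ _ hk => abs_Tdy_succ_sub_le hα.1 hα.2 hk
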